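/- Let f be a multiplicative function, n = ∏_{i=1}^r p_i^{s_i} with s_i ≥ 1, and m = u·∏_{i=1}^r p_i^{t_i} with gcd(u,p_i)=1. Then Σ_{k=1}^n f(gcd(k,n))·e^{-2πikm/n} = ∏_{i=1}^r [ f(p_i^{s_i}) + (p_i - 1)·Σ_{b=1}^{min(t_i,s_i)} p_i^{b-1}·f(p_i^{s_i - b}) − f(p_i^{s_i - t_i - 1})·p_i^{t_i}·(1 − [t_i ≥ s_i]) ]. -/

import Mathlib

/-!
Write `f = g * ζ` as Dirichlet convolutions, with `g = f * μ`. Expanding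
`f (gcd k n) = ∑_{d ∣ gcd k n} g d` and summing `ω ^ (k * m)`, `ω = exp (-2πi / n)`, over the
multiples `k` of `d` below `n` gives `n / d` if `n / d ∣ m` and `0` otherwise, so the sum is
`(g * h) n` with `h d = d · [d ∣ m]`. Both `g` and `h` are multiplicative, so the sum factors
over the prime powers `p ^ s` exactly dividing `n`. There
`g (p ^ j) = f (p ^ j) - f (p ^ (j - 1))` and `h (p ^ b) = p ^ b · [b ≤ t]`, and summation by
parts gives the stated local factor.
-/

open Finset ArithmeticFunction
open scoped ArithmeticFunction.Moebius ArithmeticFunction.zeta Function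

variable {R M : Type*}

theorem sum_range_filter_dvd_mul [AddCommMonoid M] (F : ℕ → M) {d : ℕ} (hd : d ≠ 0)
    (N : ℕ) :
    ∑ k ∈ (range (d * N)).filter (d ∣ ·), F k = ∑ j ∈ range N, F (d * j) := by
  have hmap : (range (d * N)).filter (d ∣ ·) =
      (range N).map ⟨(d * ·), mul_right_injective₀ hd⟩ := by
    ext k
    simp only [mem_filter, mem_range, mem_map, Function.Embedding.coeFn_mk]
    constructor
    · rintro ⟨hk, j, rfl⟩
      exact ⟨j, lt_of_mul_lt_mul_left hk (Nat.zero_le d), rfl⟩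
    · rintro ⟨j, hj, rfl⟩
      exact ⟨Nat.mul_lt_mul_of_pos_left hj (Nat.pos_of_ne_zero hd), dvd_mul_right d j⟩
  rw [hmap, sum_map]
  rfl

theorem sum_Icc_one_eq_sum_range [AddCommGroup M] (F : ℕ → M) {n : ℕ} (h : F n = F 0) :
    ∑ k ∈ Icc 1 n, F k = ∑ k ∈ range n, F k := by
  have hshift : ∑ k ∈ Icc 1 n, F k = ∑ k ∈ range n, F (k + 1) := by
    rw [← Ico_add_one_right_eq_Icc, sum_Ico_eq_sum_range]
    simp [add_comm]
  have := (sum_range_succ' F n).symm.trans (sum_range_succ F n)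
  rw [hshift]
  rwa [h, add_left_inj] at this

theorem sum_range_pow_mul_eq_sum_Icc [CommRing R] (a c : ℕ → R) (x : R) (hc0 : c 0 = a 0)
    (hc : ∀ j, c (j + 1) = a (j + 1) - a j) {N s : ℕ} (hN : N ≤ s) :
    ∑ b ∈ range (N + 1), x ^ b * c (s - b) =
      a s + (x - 1) * ∑ b ∈ Icc 1 N, x ^ (b - 1) * a (s - b) -
        a (s - N - 1) * x ^ N * (if s ≤ N then 0 else 1) := by
  induction N with
  | zero =>
    rcases s with _ | s
    · simp [hc0]
    · simp [hc]
  | succ N ih =>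
    rw [sum_range_succ, ih (by omega), sum_Icc_succ_top (by omega), if_neg (by omega)]
    obtain ⟨k, rfl⟩ := Nat.exists_eq_add_of_le hN
    rcases k with _ | k
    · simp only [add_zero, add_tsub_cancel_left, tsub_self, mul_one, hc0, add_tsub_cancel_right,
        zero_tsub, le_refl, ↓reduceIte, mul_zero, sub_zero]
      ring
    · simp only [show N + 1 + (k + 1) - (N + 1) = k + 1 by omega, hc,
        show N + 1 + (k + 1) - N - 1 = k + 1 by omega, Nat.add_sub_cancel]
      rw [if_neg (by omega)]
      ring

theorem Nat.Prime.pow_dvd_pow_mul_iff {p c t b : ℕ} (hp : p.Prime) (hc : ¬p ∣ c) :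
    p ^ b ∣ p ^ t * c ↔ b ≤ t := by
  refine ⟨fun h => ?_, fun h => dvd_mul_of_dvd_left (pow_dvd_pow p h) c⟩
  have hcop : (p ^ b).Coprime c := ((hp.coprime_iff_not_dvd).2 hc).pow_left b
  exact (Nat.pow_dvd_pow_iff_le_right hp.one_lt).1 (hcop.dvd_of_dvd_mul_right h)

theorem pow_dvd_mul_prod_pow_iff {ι : Type*} [Fintype ι] {p : ι → ℕ}
    (hp : ∀ i, (p i).Prime) (hpinj : Function.Injective p) {u : ℕ} (t : ι → ℕ) {i : ι}
    (hu : u.Coprime (p i)) (b : ℕ) : p i ^ b ∣ u * ∏ j, p j ^ t j ↔ b ≤ t i := by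
  classical
  have hcop : (p i).Coprime (u * ∏ j ∈ univ.erase i, p j ^ t j) :=
    hu.symm.mul_right <| Nat.Coprime.prod_right fun j hj =>
      ((Nat.coprime_primes (hp i) (hp j)).2 (hpinj.ne (ne_of_mem_erase hj).symm)).pow_right _
  rw [← mul_prod_erase univ _ (mem_univ i), mul_left_comm]
  exact (hp i).pow_dvd_pow_mul_iff ((hp i).coprime_iff_not_dvd.1 hcop)

namespace ArithmeticFunction

def ofFun [Zero R] (f : ℕ → R) : ArithmeticFunction R :=
  ⟨fun n => if n = 0 then 0 else f n, if_pos rfl⟩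

theorem ofFun_apply_of_ne_zero [Zero R] (f : ℕ → R) {n : ℕ} (hn : n ≠ 0) :
    ofFun f n = f n :=
  if_neg hn

theorem isMultiplicative_ofFun [MonoidWithZero R] {f : ℕ → R} (hf1 : f 1 = 1)
    (hf : ∀ a b : ℕ, a.Coprime b → f (a * b) = f a * f b) : (ofFun f).IsMultiplicative := by
  refine IsMultiplicative.iff_ne_zero.2 ⟨hf1, fun {a b} ha hb hab => ?_⟩
  simp only [ofFun_apply_of_ne_zero f ha, ofFun_apply_of_ne_zero f hb,
    ofFun_apply_of_ne_zero f (mul_ne_zero ha hb), hf a b hab]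

def idOnDivisors [Semiring R] (m : ℕ) : ArithmeticFunction R :=
  ⟨fun d => if d ∣ m then (d : R) else 0, by simp⟩

theorem idOnDivisors_apply [Semiring R] (m d : ℕ) :
    idOnDivisors m d = if d ∣ m then (d : R) else 0 := rfl

theorem isMultiplicative_idOnDivisors [Semiring R] (m : ℕ) :
    (idOnDivisors m : ArithmeticFunction R).IsMultiplicative := by
  refine ⟨by simp [idOnDivisors_apply], fun {a b} hab => ?_⟩
  have hdvd : a * b ∣ m ↔ a ∣ m ∧ b ∣ m :=
    ⟨fun h => ⟨dvd_of_mul_right_dvd h, dvd_of_mul_left_dvd h⟩,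
      fun h => hab.mul_dvd_of_dvd_of_dvd h.1 h.2⟩
  simp only [idOnDivisors_apply, hdvd, Nat.cast_mul, ite_and]
  split_ifs <;> simp

theorem mul_moebius_apply_prime_pow_succ [CommRing R] (f : ArithmeticFunction R) {p : ℕ}
    (hp : p.Prime) (j : ℕ) : (f * μ) (p ^ (j + 1)) = f (p ^ (j + 1)) - f (p ^ j) := by
  have hf : ∀ k, f (p ^ k) = ∑ i ∈ range (k + 1), (f * μ) (p ^ i) := fun k => by
    rw [← Nat.sum_divisors_prime_pow hp, ← coe_mul_zeta_apply, mul_assoc,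
      coe_moebius_mul_coe_zeta, mul_one]
  rw [hf (j + 1), sum_range_succ, ← hf j, add_sub_cancel_left]

theorem sum_range_mul_zeta_apply_gcd [Semiring R]
    (g : ArithmeticFunction R) (w : ℕ → R) (n : ℕ) :
    ∑ k ∈ range n, (g * ζ) (k.gcd n) * w k =
      ∑ d ∈ n.divisors, g d * ∑ k ∈ (range n).filter (d ∣ ·), w k := by
  simp_rw [coe_mul_zeta_apply, sum_mul, mul_sum]
  refine sum_comm' fun k d => ?_
  simp only [mem_range, Nat.mem_divisors, mem_filter, Nat.dvd_gcd_iff, ne_eq, Nat.gcd_eq_zero_iff]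
  constructor
  · rintro ⟨hk, ⟨hdk, hdn⟩, -⟩; exact ⟨⟨hk, hdk⟩, hdn, by omega⟩
  · rintro ⟨⟨hk, hdk⟩, hdn, -⟩; exact ⟨hk, ⟨hdk, hdn⟩, by omega⟩

theorem mul_idOnDivisors_apply_prime_pow [CommSemiring R]
    (g : ArithmeticFunction R) {p m t : ℕ} (hp : p.Prime) (hm : ∀ b, p ^ b ∣ m ↔ b ≤ t)
    (s : ℕ) :
    (g * idOnDivisors m : ArithmeticFunction R) (p ^ s) =
      ∑ b ∈ range (min t s + 1), (p : R) ^ b * g (p ^ (s - b)) := by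
  have hrange : (range (s + 1)).filter (· ≤ t) = range (min t s + 1) := by
    ext b; simp only [mem_filter, mem_range]; omega
  rw [mul_apply, Nat.sum_divisorsAntidiagonal' fun a b => g a * idOnDivisors m b,
    Nat.sum_divisors_prime_pow hp, ← hrange, sum_filter]
  refine sum_congr rfl fun b hb => ?_
  rw [idOnDivisors_apply]
  simp only [hm b]
  split_ifs with hbt
  · rw [Nat.pow_div (by simpa [Nat.lt_succ_iff] using hb) hp.pos, Nat.cast_pow, mul_comm]
  · rw [mul_zero]

theorem ofFun_mul_moebius_mul_idOnDivisors_apply_prime_pow [CommRing R]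
    (f : ℕ → R) {p m t : ℕ} (hp : p.Prime) (hm : ∀ b, p ^ b ∣ m ↔ b ≤ t) (s : ℕ) :
    (ofFun f * (μ : ArithmeticFunction R) * idOnDivisors m : ArithmeticFunction R) (p ^ s) =
      f (p ^ s) + ((p : R) - 1) * ∑ b ∈ Icc 1 (min t s), (p : R) ^ (b - 1) * f (p ^ (s - b)) -
        f (p ^ (s - t - 1)) * (p : R) ^ t * (if s ≤ t then 0 else 1) := by
  rw [mul_idOnDivisors_apply_prime_pow _ hp hm,
    sum_range_pow_mul_eq_sum_Icc (fun j => f (p ^ j))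
      (fun j => (ofFun f * (μ : ArithmeticFunction R)) (p ^ j)) (p : R)
      (by simp [ofFun_apply_of_ne_zero])
      (fun j => by simp only [mul_moebius_apply_prime_pow_succ _ hp,
        ofFun_apply_of_ne_zero f (pow_ne_zero _ hp.ne_zero)])
      (min_le_right t s)]
  rcases le_total s t with hst | hts
  · simp [hst]
  · rcases hts.eq_or_lt with rfl | hts
    · simp
    · simp [min_eq_left hts.le, hts.not_ge]

end ArithmeticFunction

namespace IsPrimitiveRoot

variable [CommRing R] [IsDomain R] {ω : R} {n : ℕ}

theorem sum_range_pow_mul (hω : IsPrimitiveRoot ω n) (m : ℕ) :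
    ∑ k ∈ range n, ω ^ (k * m) = if n ∣ m then (n : R) else 0 := by
  simp_rw [mul_comm _ m, pow_mul]
  split_ifs with h
  · simp [(hω.pow_eq_one_iff_dvd m).2 h]
  · have hne : ω ^ m - 1 ≠ 0 := sub_ne_zero.2 (mt (hω.pow_eq_one_iff_dvd m).1 h)
    have hgeom := geom_sum_mul (ω ^ m) n
    rw [← pow_mul, mul_comm m n, pow_mul, hω.pow_eq_one, one_pow, sub_self] at hgeom
    exact (mul_eq_zero.1 hgeom).resolve_right hne

theorem sum_range_filter_dvd_pow_mul (hω : IsPrimitiveRoot ω n) (hn : n ≠ 0) {d : ℕ}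
    (hd : d ∣ n) (m : ℕ) :
    ∑ k ∈ (range n).filter (d ∣ ·), ω ^ (k * m) =
      if n / d ∣ m then ((n / d : ℕ) : R) else 0 := by
  obtain ⟨N, rfl⟩ := hd
  have hd0 : d ≠ 0 := left_ne_zero_of_mul hn
  have hωd := hω.pow_of_dvd hd0 (dvd_mul_right d N)
  rw [Nat.mul_div_cancel_left N (Nat.pos_of_ne_zero hd0)] at hωd ⊢
  rw [sum_range_filter_dvd_mul _ hd0, ← hωd.sum_range_pow_mul m]
  simp_rw [mul_assoc, pow_mul]

theorem sum_range_gcd_mul_pow_mul (hω : IsPrimitiveRoot ω n) (f : ArithmeticFunction R)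
    (m : ℕ) :
    ∑ k ∈ range n, f (k.gcd n) * ω ^ (k * m) =
      (f * (μ : ArithmeticFunction R) * idOnDivisors m : ArithmeticFunction R) n := by
  rcases eq_or_ne n 0 with rfl | hn
  · simp
  conv_lhs => rw [← mul_one f, ← coe_moebius_mul_coe_zeta, ← mul_assoc]
  rw [sum_range_mul_zeta_apply_gcd, mul_apply,
    Nat.sum_divisorsAntidiagonal fun a b => (f * μ) a * idOnDivisors m b]
  refine sum_congr rfl fun d hd => ?_
  rw [hω.sum_range_filter_dvd_pow_mul hn (Nat.dvd_of_mem_divisors hd), idOnDivisors_apply]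

end IsPrimitiveRoot

theorem Complex.exp_neg_two_pi_I_mul_div (k m n : ℕ) :
    Complex.exp (-(2 * Real.pi * Complex.I * k * m / n)) =
      (Complex.exp (2 * Real.pi * Complex.I / n))⁻¹ ^ (k * m) := by
  rw [← Complex.exp_neg, ← Complex.exp_nat_mul]
  push_cast
  ring_nf

theorem dft_f_gcd_prime_factorization_general (f : ℕ → ℂ) (hf1 : f 1 = 1)
    (hf : ∀ a b : ℕ, Nat.Coprime a b → f (a * b) = f a * f b)
    (r : ℕ) (p s t : Fin r → ℕ) (u n m : ℕ)
    (hp : ∀ i, (p i).Prime) (hpinj : Function.Injective p)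
    (hn : n = ∏ i, p i ^ s i)
    (hm : m = u * ∏ i, p i ^ t i)
    (hu : ∀ i, Nat.Coprime u (p i)) :
    ∑ k ∈ Finset.Icc 1 n, f (Nat.gcd k n) *
        Complex.exp (-(2 * Real.pi * Complex.I * k * m / n)) =
      ∏ i, (f (p i ^ s i) +
        ((p i : ℂ) - 1) * ∑ b ∈ Finset.Icc 1 (min (t i) (s i)),
          (p i : ℂ) ^ (b - 1) * f (p i ^ (s i - b)) -
        f (p i ^ (s i - t i - 1)) * (p i : ℂ) ^ (t i) *
          (if s i ≤ t i then 0 else 1)) := by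
  have hn0 : n ≠ 0 := hn ▸ prod_ne_zero_iff.2 fun i _ => pow_ne_zero _ (hp i).ne_zero
  have hω : IsPrimitiveRoot (Complex.exp (2 * Real.pi * Complex.I / n))⁻¹ n :=
    (Complex.isPrimitiveRoot_exp n hn0).inv
  have hmult : (ofFun f * (μ : ArithmeticFunction ℂ) * idOnDivisors m).IsMultiplicative :=
    ((isMultiplicative_ofFun hf1 hf).mul isMultiplicative_moebius.intCast).mul
      (isMultiplicative_idOnDivisors m)
  have hcop : ((univ : Finset (Fin r)) : Set (Fin r)).Pairwise
      (Nat.Coprime on fun i => p i ^ s i) :=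
    fun i _ j _ hij => ((Nat.coprime_primes (hp i) (hp j)).2 (hpinj.ne hij)).pow _ _
  have hgcd : ∀ k : ℕ, f (k.gcd n) = ofFun f (k.gcd n) := fun k =>
    (ofFun_apply_of_ne_zero f (Nat.gcd_ne_zero_right hn0)).symm
  simp_rw [Complex.exp_neg_two_pi_I_mul_div]
  rw [sum_Icc_one_eq_sum_range _ (by simp [pow_mul, hω.pow_eq_one])]
  simp_rw [hgcd]
  rw [hω.sum_range_gcd_mul_pow_mul, hn, hmult.map_prod _ _ hcop]
  refine prod_congr rfl fun i _ => ?_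
  exact ofFun_mul_moebius_mul_idOnDivisors_apply_prime_pow f (hp i)
    (fun b => hm ▸ pow_dvd_mul_prod_pow_iff hp hpinj t (hu i) b) (s i)

theorem dft_f_gcd_prime_factorization (f : ℕ → ℂ) (hf1 : f 1 = 1)
    (hf : ∀ a b : ℕ, Nat.Coprime a b → f (a * b) = f a * f b)
    (r : ℕ) (p s t : Fin r → ℕ) (u n m : ℕ)
    (hp : ∀ i, (p i).Prime) (hpinj : Function.Injective p)
    (hs : ∀ i, 1 ≤ s i)
    (hn : n = ∏ i, p i ^ s i)
    (hm : m = u * ∏ i, p i ^ t i)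
    (hu : ∀ i, Nat.Coprime u (p i)) :
    ∑ k ∈ Finset.Icc 1 n, f (Nat.gcd k n) *
        Complex.exp (-(2 * Real.pi * Complex.I * k * m / n)) =
      ∏ i, (f (p i ^ s i) +
        ((p i : ℂ) - 1) * ∑ b ∈ Finset.Icc 1 (min (t i) (s i)),
          (p i : ℂ) ^ (b - 1) * f (p i ^ (s i - b)) -
        f (p i ^ (s i - t i - 1)) * (p i : ℂ) ^ (t i) *
          (if s i ≤ t i then 0 else 1)) :=
  dft_f_gcd_prime_factorization_general f hf1 hf r p s t u n m hp hpinj hn hm hu
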